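/- Let G, H be closed subspaces of a Hilbert space H₀ and suppose H = span{h} is one-dimensional. Let F = F_G + F_H with F_G ∈ G, F_H = λ₁h for some scalar λ₁ ≠ 0, F_G ≠ 0, and G ≠ H. Define r⁰ = P_{G^⊥}(F) and r¹ = P_{G^⊥}(P_{H^⊥}(r⁰)). Then r⁰ = λ₁ P_{G^⊥}(h), and r¹ is a scalar multiple of r⁰; specifically r¹ = ((λ₁ − λ₂)/λ₁) r⁰ where P_H(P_{G^⊥}(r⁰)) = λ₂ h. Hence r⁰ and r¹ are linearly dependent. -/

import Mathlib

noncomputable def proj {E : Type*} [NormedAddCommGroup E] [InnerProductSpace ℝ E]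
    (K : Submodule ℝ E) [CompleteSpace K] : E →L[ℝ] E :=
  K.subtypeL.comp (K.orthogonalProjectionOnto)

/-!
`P_{G^⊥}` kills `F_G`, so `r⁰ = λ₁ P_{G^⊥} h` lies in `G^⊥`. Writing `P_{H^⊥} = 1 - P_H` then gives
`r¹ = r⁰ - λ₂ P_{G^⊥} h = (1 - λ₂ / λ₁) r⁰`.
-/

section proj

variable {E : Type*} [NormedAddCommGroup E] [InnerProductSpace ℝ E]

theorem proj_apply_mem (K : Submodule ℝ E) [CompleteSpace K] (x : E) : proj K x ∈ K :=
  K.starProjection_apply_mem x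

theorem proj_eq_self_of_mem {K : Submodule ℝ E} [CompleteSpace K] {x : E} (hx : x ∈ K) :
    proj K x = x :=
  K.starProjection_eq_self_iff.2 hx

theorem proj_orthogonal_eq_zero_of_mem {K : Submodule ℝ E} [CompleteSpace Kᗮ] {x : E}
    (hx : x ∈ K) : proj Kᗮ x = 0 :=
  Kᗮ.starProjection_apply_eq_zero_iff.2 (K.le_orthogonal_orthogonal hx)

theorem proj_orthogonal_apply (K : Submodule ℝ E) [CompleteSpace K] [CompleteSpace Kᗮ] (x : E) :
    proj Kᗮ x = x - proj K x :=
  K.starProjection_orthogonal_val x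

theorem proj_orthogonal_add_smul_of_mem {G : Submodule ℝ E} [CompleteSpace Gᗮ] {g : E}
    (hg : g ∈ G) (c : ℝ) (h : E) : proj Gᗮ (g + c • h) = c • proj Gᗮ h := by
  rw [map_add, map_smul, proj_orthogonal_eq_zero_of_mem hg, zero_add]

theorem proj_proj_orthogonal_of_mem {L : Submodule ℝ E} [CompleteSpace L] (K : Submodule ℝ E)
    [CompleteSpace K] [CompleteSpace Kᗮ] {r : E} (hr : r ∈ L) :
    proj L (proj Kᗮ r) = r - proj L (proj K r) := by
  rw [proj_orthogonal_apply, map_sub, proj_eq_self_of_mem hr]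

end proj

theorem stmt13_general {E : Type*} [NormedAddCommGroup E] [InnerProductSpace ℝ E]
    (G : Submodule ℝ E) (h : E)
    [CompleteSpace ↥Gᗮ] [CompleteSpace ↥(Submodule.span ℝ {h})]
    [CompleteSpace ↥(Submodule.span ℝ {h})ᗮ]
    (FG : E) (hFG : FG ∈ G)
    (lam1 : ℝ) (hlam1 : lam1 ≠ 0)
    (F : E) (hF : F = FG + lam1 • h)
    (r0 r1 : E) (hr0 : r0 = proj Gᗮ F)
    (hr1 : r1 = proj Gᗮ (proj (Submodule.span ℝ {h})ᗮ r0))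
    (lam2 : ℝ) (hlam2 : proj (Submodule.span ℝ {h}) (proj Gᗮ r0) = lam2 • h) :
    r0 = lam1 • proj Gᗮ h ∧ r1 = ((lam1 - lam2) / lam1) • r0 := by
  have hr0_mem : r0 ∈ Gᗮ := hr0 ▸ proj_apply_mem Gᗮ F
  have hr0_eq : r0 = lam1 • proj Gᗮ h := by
    rw [hr0, hF, proj_orthogonal_add_smul_of_mem hFG]
  rw [proj_eq_self_of_mem hr0_mem] at hlam2
  refine ⟨hr0_eq, ?_⟩
  rw [hr1, proj_proj_orthogonal_of_mem _ hr0_mem, hlam2, map_smul, hr0_eq]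
  match_scalars
  field_simp

theorem stmt13 {E : Type*} [NormedAddCommGroup E] [InnerProductSpace ℝ E] [CompleteSpace E]
    (G : Submodule ℝ E) [CompleteSpace G] (h : E)
    [CompleteSpace ↥Gᗮ] [CompleteSpace ↥(Submodule.span ℝ {h})]
    [CompleteSpace ↥(Submodule.span ℝ {h})ᗮ]
    (FG : E) (hFG : FG ∈ G) (hFGne : FG ≠ 0)
    (lam1 : ℝ) (hlam1 : lam1 ≠ 0)
    (hGH : G ≠ Submodule.span ℝ {h})
    (F : E) (hF : F = FG + lam1 • h)
    (r0 r1 : E) (hr0 : r0 = proj Gᗮ F)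
    (hr1 : r1 = proj Gᗮ (proj (Submodule.span ℝ {h})ᗮ r0))
    (lam2 : ℝ) (hlam2 : proj (Submodule.span ℝ {h}) (proj Gᗮ r0) = lam2 • h) :
    r0 = lam1 • proj Gᗮ h ∧ r1 = ((lam1 - lam2) / lam1) • r0 :=
  stmt13_general G h FG hFG lam1 hlam1 F hF r0 r1 hr0 hr1 lam2 hlam2
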